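/- Let m ≥ 1, fix i ∈ {1,…,m}, let D_1,…,D_m be positive reals, let z and y_i be real numbers, and define π_sp(A) = t₂(A)·(A+D_i)²·A·exp(y_i²/(A+D_i)) for A > 0. Then π_sp is positive and differentiable on (0,∞), and for every A > 0, π_sp′(A)/π_sp(A) = l_i(A) − 2·t₃(A)/t₂(A) − D_i/(4A(A+D_i)) + 1/A − z²·D_i/(4A(A+D_i)) − y_i²/(A+D_i)². (This is the differential-equation verification in Proposition 2 of the paper: π_sp is the matching prior for the two-level model without covariates.) -/

import Mathlib

/-!
Taking logarithmic derivatives turns the product `t₂(A) · (A+Dᵢ)² · A · exp(yᵢ²/(A+Dᵢ))`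
into the sum `-2 t₃/t₂ + 2/(A+Dᵢ) + 1/A - yᵢ²/(A+Dᵢ)²`, using `t₂' = -2 t₃`. On the
right-hand side of the equation the `(1+z²)·Dᵢ/(4A(A+Dᵢ))` term of `lᵢ` cancels against the two
subtracted terms, leaving `lᵢ` only its `2/(A+Dᵢ)`, so both sides agree.
-/

open Finset Real

variable {ι : Type*} [Fintype ι]

/-- The paper's `t_k`. -/
noncomputable def invPowSum (D : ι → ℝ) (k : ℕ) (A : ℝ) : ℝ := ∑ u, ((A + D u) ^ k)⁻¹

theorem invPowSum_pos [Nonempty ι] {D : ι → ℝ} {A : ℝ} (hAD : ∀ u, 0 < A + D u) (k : ℕ) :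
    0 < invPowSum D k A :=
  sum_pos (fun u _ => by have := hAD u; positivity) univ_nonempty

theorem hasDerivAt_invPowSum {D : ι → ℝ} {A : ℝ} (hAD : ∀ u, A + D u ≠ 0) (k : ℕ) :
    HasDerivAt (invPowSum D k) (-k * invPowSum D (k + 1) A) A := by
  unfold invPowSum
  rw [mul_sum]
  refine HasDerivAt.fun_sum fun u _ => ?_
  refine (((hasDerivAt_id' A).add_const (D u)).fun_pow k |>.inv
    (pow_ne_zero k (hAD u))).congr_deriv ?_
  have := hAD u
  rcases k with _ | k
  · simp
  · rw [Nat.add_sub_cancel]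
    field_simp
    ring

theorem Real.logDeriv_exp_comp {f : ℝ → ℝ} {x : ℝ} (hf : DifferentiableAt ℝ f x) :
    logDeriv (fun x => exp (f x)) x = deriv f x := by
  rw [← Function.comp_def, logDeriv_comp differentiableAt_exp hf, Real.logDeriv_exp, Pi.one_apply,
    one_mul]

theorem logDeriv_add_const_pow (c x : ℝ) (n : ℕ) :
    logDeriv (fun x => (x + c) ^ n) x = n / (x + c) := by
  rw [logDeriv_fun_pow (by fun_prop), logDeriv_apply, deriv_add_const, deriv_id'', mul_one_div]

noncomputable def matchingPrior (D : ι → ℝ) (i : ι) (y A : ℝ) : ℝ :=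
  invPowSum D 2 A * (A + D i) ^ 2 * A * exp (y ^ 2 / (A + D i))

variable {D : ι → ℝ} {A : ℝ}

theorem differentiableAt_matchingPrior (hAD : ∀ u, A + D u ≠ 0) (i : ι) (y : ℝ) :
    DifferentiableAt ℝ (matchingPrior D i y) A := by
  have := (hasDerivAt_invPowSum hAD 2).differentiableAt
  have := hAD i
  unfold matchingPrior
  fun_prop (disch := assumption)

variable [Nonempty ι]

theorem matchingPrior_pos (hAD : ∀ u, 0 < A + D u) (hA : 0 < A) (i : ι) (y : ℝ) :
    0 < matchingPrior D i y A := by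
  have := invPowSum_pos hAD 2
  have := hAD i
  unfold matchingPrior
  positivity

theorem logDeriv_matchingPrior (hAD : ∀ u, 0 < A + D u) (hA : 0 < A) (i : ι) (y : ℝ) :
    logDeriv (matchingPrior D i y) A =
      -2 * invPowSum D 3 A / invPowSum D 2 A + 2 / (A + D i) + 1 / A - y ^ 2 / (A + D i) ^ 2 := by
  have ht := hasDerivAt_invPowSum (fun u => (hAD u).ne') 2
  have hdt := ht.differentiableAt
  have htne := (invPowSum_pos hAD 2).ne'
  have hAi := (hAD i).ne'
  have hquot : HasDerivAt (fun A => y ^ 2 / (A + D i)) (-y ^ 2 / (A + D i) ^ 2) A :=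
    ((hasDerivAt_const A (y ^ 2)).div ((hasDerivAt_id' A).add_const (D i)) hAi).congr_deriv
      (by ring)
  unfold matchingPrior
  rw [logDeriv_mul, logDeriv_mul, logDeriv_mul, logDeriv_apply, ht.deriv, logDeriv_add_const_pow,
    logDeriv_id', Real.logDeriv_exp_comp hquot.differentiableAt, hquot.deriv]
  · push_cast; ring
  all_goals first
    | fun_prop
    | simp [*, hA.ne', (exp_pos _).ne']

theorem matching_prior_no_covariates_solves_ode_general
    (m : ℕ) (D : Fin m → ℝ) (hD : ∀ u, 0 < D u) (i : Fin m)
    (z yi : ℝ)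
    (prsp : ℝ → ℝ)
    (hprsp : ∀ A : ℝ, prsp A =
      (∑ u : Fin m, ((A + D u) ^ 2)⁻¹) * (A + D i) ^ 2 * A
        * Real.exp (yi ^ 2 / (A + D i))) :
    ∀ A : ℝ, 0 < A →
      0 < prsp A ∧ DifferentiableAt ℝ prsp A ∧
      deriv prsp A / prsp A =
        (2 / (A + D i) + (1 + z ^ 2) * D i / (4 * A * (A + D i)))
          - 2 * (∑ u : Fin m, ((A + D u) ^ 3)⁻¹)
              / (∑ u : Fin m, ((A + D u) ^ 2)⁻¹)
          - D i / (4 * A * (A + D i))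
          + 1 / A
          - z ^ 2 * D i / (4 * A * (A + D i))
          - yi ^ 2 / (A + D i) ^ 2 := by
  obtain rfl : prsp = matchingPrior D i yi := funext hprsp
  intro A hA
  have hAD : ∀ u, 0 < A + D u := fun u => add_pos hA (hD u)
  have : Nonempty (Fin m) := ⟨i⟩
  refine ⟨matchingPrior_pos hAD hA i yi, differentiableAt_matchingPrior (fun u => (hAD u).ne') i yi,
    ?_⟩
  rw [← logDeriv_apply, logDeriv_matchingPrior hAD hA i yi]
  unfold invPowSum
  ring

/-- differential-equation verification in Proposition 2 of
the paper. `pr_sp(A) = tr[V⁻²]·(A+Dᵢ)²·A·exp(yᵢ²/(A+Dᵢ))` is the matching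
prior for the two-level model without covariates. -/
theorem matching_prior_no_covariates_solves_ode
    (m : ℕ) (hm : 1 ≤ m) (D : Fin m → ℝ) (hD : ∀ u, 0 < D u) (i : Fin m)
    (z yi : ℝ)
    (prsp : ℝ → ℝ)
    (hprsp : ∀ A : ℝ, prsp A =
      (∑ u : Fin m, ((A + D u) ^ 2)⁻¹) * (A + D i) ^ 2 * A
        * Real.exp (yi ^ 2 / (A + D i))) :
    ∀ A : ℝ, 0 < A →
      0 < prsp A ∧ DifferentiableAt ℝ prsp A ∧
      deriv prsp A / prsp A =
        (2 / (A + D i) + (1 + z ^ 2) * D i / (4 * A * (A + D i)))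
          - 2 * (∑ u : Fin m, ((A + D u) ^ 3)⁻¹)
              / (∑ u : Fin m, ((A + D u) ^ 2)⁻¹)
          - D i / (4 * A * (A + D i))
          + 1 / A
          - z ^ 2 * D i / (4 * A * (A + D i))
          - yi ^ 2 / (A + D i) ^ 2 :=
  matching_prior_no_covariates_solves_ode_general m D hD i z yi prsp hprsp
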